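/- arXiv:1807.05833 — 4 statements merged into one kernel-verified Lean document; each statement's English description precedes it below -/
import Mathlib

section
/- In any I-topological system (X, ⊨, A), x ⊨ ¬a if and only if for all y ∈ X with p*(x) ≤ p*(y), y ⊭ a. -/
/-- An I-topological system: a set `X`, a Heyting algebra `A`, and a satisfaction
relation `Sat` satisfying the four axioms.  The pointwise order `p*(x) ≤ p*(y)` on
the induced maps into `{0,1}` is expressed as `∀ c, Sat x c → Sat y c`. -/
structure ITopSys (X : Type*) (A : Type*) [HeytingAlgebra A] where
  Sat : X → A → Prop
  not_bot : ∀ x : X, ¬ Sat x ⊥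
  sat_inf : ∀ x a b, Sat x (a ⊓ b) ↔ (Sat x a ∧ Sat x b)
  sat_sup : ∀ x a b, Sat x (a ⊔ b) ↔ (Sat x a ∨ Sat x b)
  sat_himp : ∀ x a b, Sat x (a ⇨ b) ↔
    ∀ y : X, (∀ c, Sat x c → Sat y c) → (¬ Sat y a ∨ Sat y b)

/-- A system is Heyting algebraic when the canonical map `p* : X → Hom(A, {0,1})`
(taking values in bounded distributive lattice homomorphisms into `Bool`)
given by `p*(x)(a) = 1 ↔ x ⊨ a` is bijective. -/
def ITopSys.IsHeytingAlgebraic {X A : Type*} [HeytingAlgebra A] (S : ITopSys X A) : Prop :=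
  ∃ p : X → BoundedLatticeHom A Bool,
    (∀ x a, p x a = true ↔ S.Sat x a) ∧ Function.Bijective p

theorem stmt1_general {X A : Type*} [HeytingAlgebra A] (S : ITopSys X A)
    (x : X) (a : A) :
    S.Sat x (a ⇨ ⊥) ↔ ∀ y : X, (∀ c, S.Sat x c → S.Sat y c) → ¬ S.Sat y a := by
  rw [S.sat_himp]
  exact forall₂_congr fun y _ => or_iff_left (S.not_bot y)

theorem stmt1 {X A : Type*} [Nonempty X] [HeytingAlgebra A] (S : ITopSys X A)
    (x : X) (a : A) :
    S.Sat x (a ⇨ ⊥) ↔ ∀ y : X, (∀ c, S.Sat x c → S.Sat y c) → ¬ S.Sat y a :=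
  stmt1_general S x a
end

section
/- For any Heyting algebra A, the triple (Hom(A,{0,1}), ⊨*, A), where v ⊨* a iff v(a) = 1, is an I-topological system. In particular: v ⊨* 0 for no v; v ⊨* a∧b iff v ⊨* a and v ⊨* b; v ⊨* a∨b iff v ⊨* a or v ⊨* b; and v ⊨* a→b iff for all v' ∈ Hom(A,{0,1}) with v ≤ v' pointwise, v' ⊭* a or v' ⊨* b. -/
open Order

namespace Order.Ideal.IsPrime

variable {α : Type*} [Lattice α] [BoundedOrder α] {J : Ideal α}

open Classical in
noncomputable def toBoolHom (hJ : J.IsPrime) : BoundedLatticeHom α Bool where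
  toFun x := decide (x ∉ J)
  map_sup' x y := by simp [Ideal.sup_mem_iff]
  map_inf' x y := by
    have : x ⊓ y ∈ J ↔ x ∈ J ∨ y ∈ J :=
      ⟨hJ.mem_or_mem, fun h => h.elim (J.lower inf_le_left) (J.lower inf_le_right)⟩
    simp [this]
  map_top' := by simp [hJ.top_notMem]
  map_bot' := by simp

open Classical in
@[simp]
theorem toBoolHom_apply (hJ : J.IsPrime) (x : α) : hJ.toBoolHom x = decide (x ∉ J) :=
  rfl

end Order.Ideal.IsPrime

theorem Order.PFilter.exists_boundedLatticeHom_bool_of_notMem {α : Type*} [DistribLattice α]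
    [BoundedOrder α] (F : PFilter α) {b : α} (hb : b ∉ F) :
    ∃ w : BoundedLatticeHom α Bool, (∀ x ∈ F, w x = true) ∧ w b = false := by
  have hdisj : Disjoint (F : Set α) (Ideal.principal b : Set α) :=
    Set.disjoint_left.2 fun x hxF hxb => hb (F.mem_of_le hxb hxF)
  obtain ⟨J, hJ, hbJ, hFJ⟩ := DistribLattice.prime_ideal_of_disjoint_filter_ideal hdisj
  refine ⟨hJ.toBoolHom, fun x hx => ?_, ?_⟩
  · simpa using Set.disjoint_left.1 hFJ hx
  · simpa using hbJ (Ideal.mem_principal.2 le_rfl)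

namespace BoundedLatticeHom

theorem apply_eq_true_of_le {α : Type*} [Lattice α] [BoundedOrder α]
    (v : BoundedLatticeHom α Bool) {x y : α} (h : x ≤ y) (hx : v x = true) : v y = true :=
  Bool.le_iff_imp.1 (OrderHomClass.mono v h) hx

variable {A : Type*} [HeytingAlgebra A]

theorem isPFilter_setOf_apply_himp_eq_true (v : BoundedLatticeHom A Bool) (a : A) :
    IsPFilter {x | v (a ⇨ x) = true} := by
  refine IsPFilter.of_def ⟨⊤, by simp⟩ (fun x hx y hy => ⟨x ⊓ y, ?_, inf_le_left, inf_le_right⟩)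
    fun {_ _} hxy hx => v.apply_eq_true_of_le (himp_le_himp_left hxy) hx
  simp_all [himp_inf_distrib]

theorem exists_le_of_apply_himp_eq_false (v : BoundedLatticeHom A Bool) {a b : A}
    (h : v (a ⇨ b) = false) :
    ∃ w : BoundedLatticeHom A Bool, (∀ c, v c = true → w c = true) ∧ w a = true ∧ w b = false := by
  let F := (v.isPFilter_setOf_apply_himp_eq_true a).toPFilter
  have hbF : b ∉ F := fun hb => Bool.false_ne_true (h.symm.trans hb)
  obtain ⟨w, hFw, hwb⟩ := F.exists_boundedLatticeHom_bool_of_notMem hbF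
  have haF : a ∈ F := show v (a ⇨ a) = true by simp
  exact ⟨w, fun c hc => hFw c (v.apply_eq_true_of_le le_himp hc), hFw a haF, hwb⟩

theorem apply_himp_eq_true_iff (v : BoundedLatticeHom A Bool) (a b : A) :
    v (a ⇨ b) = true ↔ ∀ w : BoundedLatticeHom A Bool,
      (∀ c, v c = true → w c = true) → w a = true → w b = true := by
  refine ⟨fun hv w hvw hwa => w.apply_eq_true_of_le (inf_himp_le (a := a)) ?_, fun h => ?_⟩
  · rw [map_inf, hwa, hvw (a ⇨ b) hv]
    rfl
  · by_contra hv
    obtain ⟨w, hvw, hwa, hwb⟩ := v.exists_le_of_apply_himp_eq_false (Bool.eq_false_iff.2 hv)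
    simp [h w hvw hwa] at hwb

end BoundedLatticeHom

theorem stmt4 {A : Type*} [HeytingAlgebra A] :
    ∃ S : ITopSys (BoundedLatticeHom A Bool) A,
      ∀ (v : BoundedLatticeHom A Bool) (a : A), S.Sat v a ↔ v a = true := by
  refine ⟨⟨fun v a => v a = true, fun v => by simp, fun v a b => by simp,
    fun v a b => by simp, fun v a b => ?_⟩, fun _ _ => Iff.rfl⟩
  simp only [BoundedLatticeHom.apply_himp_eq_true_iff, imp_iff_not_or]
end

section
/- Let A be a Heyting algebra and v ∈ Hom(A,{0,1}). If v(a→b) = 1 and v ≤ v' pointwise for some v' ∈ Hom(A,{0,1}), then v'(a) = 0 or v'(b) = 1. -/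
theorem map_himp_le {α β F : Type*} [GeneralizedHeytingAlgebra α] [GeneralizedHeytingAlgebra β]
    [FunLike F α β] [InfHomClass F α β] (f : F) (a b : α) : f (a ⇨ b) ≤ f a ⇨ f b :=
  le_himp_iff.2 <| (map_inf f (a ⇨ b) a).symm.trans_le (OrderHomClass.mono f himp_inf_le)

theorem stmt5 {A : Type*} [HeytingAlgebra A] (v v' : BoundedLatticeHom A Bool)
    (a b : A) (h : v (a ⇨ b) = true) (hle : ∀ c, v c ≤ v' c) :
    v' a = false ∨ v' b = true := by
  have himp : v' (a ⇨ b) = true := top_unique (h.symm.trans_le (hle (a ⇨ b)))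
  have hmp : true ≤ v' a ⇨ v' b := himp ▸ map_himp_le v' a b
  revert hmp
  cases v' a <;> cases v' b <;> decide
end

section
/- Let A be a Heyting algebra and v ∈ Hom(A,{0,1}). If v(a→b) = 0 then there exists w ∈ Hom(A,{0,1}) with v ≤ w pointwise, w(a) = 1 and w(b) = 0. -/
/-!
Write `F = {c | v (a ⇨ c) = 1}`. It is a filter containing `a` and every `c` with `v c = 1`,
and since `c ≤ b` forces `v (a ⇨ c) ≤ v (a ⇨ b) = 0`, it is disjoint from the principal ideal
of `b`. The prime ideal theorem separates `F` from `↓b` by a prime ideal `J`, and the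
characteristic function of the prime filter `A \ J` is the required `w`.
-/

namespace Order.Ideal

theorem IsPrime.inf_mem_iff {α : Type*} [SemilatticeInf α] {J : Ideal α} (hJ : J.IsPrime)
    {c d : α} : c ⊓ d ∈ J ↔ c ∈ J ∨ d ∈ J :=
  ⟨hJ.mem_or_mem, fun h => h.elim (J.lower inf_le_left) (J.lower inf_le_right)⟩

variable {α : Type*} [Lattice α] [BoundedOrder α]

open Classical in
noncomputable def notMemHom (J : Ideal α) [hJ : J.IsPrime] : BoundedLatticeHom α Bool where
  toFun c := decide (c ∉ J)
  map_sup' c d := by simp only [sup_mem_iff, not_and_or, Bool.decide_or, Bool.max_eq_or]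
  map_inf' c d := by simp only [hJ.inf_mem_iff, not_or, Bool.decide_and, Bool.min_eq_and]
  map_top' := by simpa using hJ.top_notMem
  map_bot' := by simp [bot_mem]

open Classical in
@[simp]
theorem notMemHom_apply (J : Ideal α) [J.IsPrime] (c : α) :
    notMemHom J c = decide (c ∉ J) :=
  rfl

end Order.Ideal

theorem map_eq_true_of_le {F α : Type*} [Preorder α] [FunLike F α Bool] [OrderHomClass F α Bool]
    (v : F) {c d : α} (hcd : c ≤ d) (hc : v c = true) : v d = true :=
  Bool.eq_true_of_true_le (hc ▸ OrderHomClass.mono v hcd)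

theorem isPFilter_setOf_map_himp_eq_true {A F : Type*} [HeytingAlgebra A] [FunLike F A Bool]
    [InfTopHomClass F A Bool] (v : F) (a : A) :
    Order.IsPFilter {c | v (a ⇨ c) = true} := by
  refine .of_def ⟨⊤, by simp⟩ (fun c hc d hd => ⟨c ⊓ d, ?_, inf_le_left, inf_le_right⟩)
    (fun {c d} hcd hc => ?_)
  · simp_all [himp_inf_distrib]
  · exact map_eq_true_of_le v (himp_le_himp_left hcd) hc

theorem stmt6 {A : Type*} [HeytingAlgebra A] (v : BoundedLatticeHom A Bool)
    (a b : A) (h : v (a ⇨ b) = false) :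
    ∃ w : BoundedLatticeHom A Bool, (∀ c, v c ≤ w c) ∧ w a = true ∧ w b = false := by
  let F := (isPFilter_setOf_map_himp_eq_true v a).toPFilter
  have disjoint : Disjoint (F : Set A) (Order.Ideal.principal b) :=
    Set.disjoint_left.2 fun c hcF hcb => Bool.false_ne_true <|
      h ▸ map_eq_true_of_le v (himp_le_himp_left (Order.Ideal.mem_principal.1 hcb)) hcF
  obtain ⟨J, hJ, hbJ, hFJ⟩ := DistribLattice.prime_ideal_of_disjoint_filter_ideal disjoint
  have notMem_J {c : A} (hc : v (a ⇨ c) = true) : c ∉ J := Set.disjoint_left.1 hFJ hc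
  refine ⟨Order.Ideal.notMemHom J, fun c => Bool.le_iff_imp.2 fun hc => ?_,
    by simp [notMem_J], by simp [hbJ le_rfl]⟩
  simpa using notMem_J (map_eq_true_of_le v le_himp hc)
end
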